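/- Let R be a nontrivial finite commutative ring ((0 : R) ≠ 1, R finite), Σ an alphabet, and r : List Σ → R a rational series over R, i.e., r = ‖A‖ for some weighted automaton A over R and Σ. Then r ∈ Rev(R,Σ) if and only if for every x ∈ R, the support of the series w ↦ r(w) + x belongs to RevL(R,Σ). -/

import Mathlib

open Matrix

namespace RevWA

/-- A weighted automaton over a semiring `S` and alphabet `α`, given by a linear
representation: number of states `n`, initial weight vector, transition matrices,
and final weight vector. -/
structure WA (S : Type) [Semiring S] (α : Type) where
  n : ℕ
  init : Fin n → S
  trans : α → Matrix (Fin n) (Fin n) S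
  final : Fin n → S

variable {S : Type} [Semiring S] {α : Type}

/-- The matrix associated to a word: product of the transition matrices of its letters. -/
def WA.matWord (A : WA S α) (w : List α) : Matrix (Fin A.n) (Fin A.n) S :=
  (w.map A.trans).prod

/-- The series realized by a weighted automaton: `i ⬝ μ(w) ⬝ f`. -/
def WA.series (A : WA S α) : List α → S :=
  fun w => A.init ⬝ᵥ (A.matWord w).mulVec A.final

/-- A matrix has at most one nonzero entry in each row. -/
def rowOk {n : ℕ} (M : Matrix (Fin n) (Fin n) S) : Prop :=
  ∀ i j j', M i j ≠ 0 → M i j' ≠ 0 → j = j'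

/-- A matrix has at most one nonzero entry in each column. -/
def colOk {n : ℕ} (M : Matrix (Fin n) (Fin n) S) : Prop :=
  ∀ i i' j, M i j ≠ 0 → M i' j ≠ 0 → i = i'

/-- A weighted automaton is reversible if each transition matrix has at most one
nonzero entry in each row and at most one nonzero entry in each column. -/
def WA.Reversible (A : WA S α) : Prop :=
  ∀ a : α, rowOk (A.trans a) ∧ colOk (A.trans a)

/-- A weighted automaton has exactly one initial state. -/
def WA.OneInitial (A : WA S α) : Prop :=
  ∃! q : Fin A.n, A.init q ≠ 0

/-- `Rev S α`: series realized by reversible weighted automata over `S` and `α`. -/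
def Rev (S : Type) [Semiring S] (α : Type) : Set (List α → S) :=
  {r | ∃ A : WA S α, A.Reversible ∧ A.series = r}

/-- `Rev₁ S α`: series realized by reversible weighted automata over `S` and `α`
with exactly one initial state. -/
def Rev1 (S : Type) [Semiring S] (α : Type) : Set (List α → S) :=
  {r | ∃ A : WA S α, A.Reversible ∧ A.OneInitial ∧ A.series = r}

/-- The support of a series. -/
def supp (r : List α → S) : Set (List α) :=
  {w | r w ≠ 0}

/-- `RevL S α`: supports of series realized by reversible weighted automata. -/
def RevL (S : Type) [Semiring S] (α : Type) : Set (Set (List α)) :=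
  {L | ∃ r ∈ Rev S α, supp r = L}

/-- `RevL₁ S α`: supports of series realized by reversible weighted automata with
exactly one initial state. -/
def RevL1 (S : Type) [Semiring S] (α : Type) : Set (Set (List α)) :=
  {L | ∃ r ∈ Rev1 S α, supp r = L}

/-- The characteristic series of a language `L` over `S`. -/
noncomputable def charSeries (S : Type) [Semiring S] {α : Type} (L : Set (List α)) :
    List α → S :=
  L.indicator 1

/-- A reversible nondeterministic finite automaton: deterministic and
codeterministic transition relation. -/
structure RevNFA (α : Type) where
  Q : Type
  fintypeQ : Fintype Q
  δ : Q → α → Q → Prop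
  I : Set Q
  F : Set Q
  det : ∀ p a q q', δ p a q → δ p a q' → q = q'
  codet : ∀ p p' a q, δ p a q → δ p' a q → p = p'

/-- Paths in a reversible NFA. -/
inductive RevNFA.Path {α : Type} (A : RevNFA α) : A.Q → List α → A.Q → Prop
  | nil (q : A.Q) : RevNFA.Path A q [] q
  | cons {p q r : A.Q} {a : α} {w : List α} :
      A.δ p a q → RevNFA.Path A q w r → RevNFA.Path A p (a :: w) r

/-- The language recognized by a reversible NFA. -/
def RevNFA.lang {α : Type} (A : RevNFA α) : Set (List α) :=
  {w | ∃ p ∈ A.I, ∃ q ∈ A.F, A.Path p w q}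

/-- A reversible NFA has exactly one initial state. -/
def RevNFA.OneInitial {α : Type} (A : RevNFA α) : Prop :=
  ∃ q : A.Q, A.I = {q}

/-- `RevL(𝔹,α)`: languages recognized by reversible NFAs. -/
def RevLB (α : Type) : Set (Set (List α)) :=
  {L | ∃ A : RevNFA α, A.lang = L}

/-- `RevL₁(𝔹,α)`: languages recognized by reversible NFAs with exactly one
initial state. -/
def RevL1B (α : Type) : Set (Set (List α)) :=
  {L | ∃ A : RevNFA α, A.OneInitial ∧ A.lang = L}

end RevWA

/-!
The word matrices `μ w` of a reversible automaton over a finite commutative ring `R` are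
determined by the image of `w` under a morphism from the free monoid into the monoid of partial
injections of a finite set. Over a local ring `R` with `𝔪 ^ B = 0` that set consists of triples
(state, unit, list of at most `B` elements of `𝔪`): a step multiplies the unit by a unit entry or
pushes a non-unit entry onto the list, so it is injective wherever it is defined, and when the
list overflows the weight is `0` anyway. A general finite ring is the product of its
localizations at maximal ideals. Conversely, every function of such a morphism is realized by a
reversible automaton whose states are partial injections, moved by right translation where it is
injective, started in all partial identities and with Möbius-inverted final weights.

Hence `r ∈ Rev` gives `r + x ∈ Rev` for every `x`. If every `supp (r + x)` is the support of some
`s x ∈ Rev`, combining the morphisms of all the `s x` shows that `r w = -x`, for the unique `x`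
with `s x w = 0`, is again a function of such a morphism.
-/

namespace PEquiv

variable {α β γ : Type*}

open Classical in
noncomputable def ofPartialInjective (f : α → Option β)
    (hf : ∀ a₁ a₂ b, f a₁ = some b → f a₂ = some b → a₁ = a₂) : α ≃. β where
  toFun := f
  invFun b := if h : ∃ a, f a = some b then some h.choose else none
  inv a b := by
    by_cases h : ∃ a, f a = some b
    · simp only [dif_pos h, Option.some.injEq]
      exact ⟨fun e => e ▸ h.choose_spec, fun e => hf _ _ _ h.choose_spec e⟩
    · simp only [dif_neg h, reduceCtorEq, false_iff]
      exact fun e => h ⟨a, e⟩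

@[simp]
theorem coe_ofPartialInjective (f : α → Option β) (hf) : ⇑(ofPartialInjective f hf) = f := rfl

@[simp]
theorem trans_apply (f : α ≃. β) (g : β ≃. γ) (a : α) : f.trans g a = (f a).bind g :=
  rfl

@[simp]
theorem ofSet_apply (s : Set α) [DecidablePred (· ∈ s)] (a : α) :
    ofSet s a = if a ∈ s then some a else none :=
  rfl

instance [Finite α] [Finite β] : Finite (α ≃. β) :=
  Finite.of_injective _ DFunLike.coe_injective

theorem mem_of_toMatrix_ne_zero {R : Type*} [DecidableEq β] [Semiring R] {f : α ≃. β} {a : α}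
    {b : β} (h : (f.toMatrix : Matrix α β R) a b ≠ 0) : b ∈ f a := by
  by_contra hb
  exact h (by rw [toMatrix_apply, if_neg hb])

theorem toMatrix_mulVec_apply {R : Type*} [Fintype β] [DecidableEq β] [Semiring R]
    (f : α ≃. β) (v : β → R) (a : α) : (f.toMatrix *ᵥ v) a = (f a).elim 0 v := by
  rcases h : f a with _ | b <;> simp [mulVec, dotProduct, toMatrix_apply, h]

@[simp]
def listTrans {ι : Type*} (θ : ι → α ≃. α) : List ι → α ≃. α
  | [] => PEquiv.refl α
  | a :: w => (θ a).trans (listTrans θ w)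

theorem toMatrix_listTrans {ι R : Type*} [Fintype α] [DecidableEq α] [Semiring R]
    (θ : ι → α ≃. α) (w : List ι) :
    (listTrans θ w).toMatrix = (w.map fun a => ((θ a).toMatrix : Matrix α α R)).prod := by
  induction w with
  | nil => exact toMatrix_refl
  | cons a w ih => simp [toMatrix_trans, ih]

theorem elim_listTrans_apply {ι m R : Type*} [Fintype m] [DecidableEq m] [Semiring R]
    (θ : ι → α ≃. α) (μ : ι → Matrix m m R) (ρ : α → m → R)
    (h : ∀ a x, (θ a x).elim 0 ρ = ρ x ᵥ* μ a) (w : List ι) (x : α) :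
    (listTrans θ w x).elim 0 ρ = ρ x ᵥ* (w.map μ).prod := by
  induction w generalizing x with
  | nil => simp
  | cons a w ih =>
    rw [listTrans, trans_apply, List.map_cons, List.prod_cons, ← vecMul_vecMul, ← h]
    rcases θ a x with _ | y
    · simp
    · exact ih y

section sigma

variable {ι : Type*} {α β : ι → Type*}

noncomputable def sigma (f : ∀ i, α i ≃. β i) : (Σ i, α i) ≃. (Σ i, β i) :=
  ofPartialInjective (fun x => (f x.1 x.2).map (Sigma.mk x.1)) <| by
    rintro ⟨i, a⟩ ⟨j, b⟩ ⟨k, c⟩ ha hb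
    simp only [Option.map_eq_some_iff, Sigma.mk.inj_iff] at ha hb
    obtain ⟨a', ha', rfl, ha''⟩ := ha
    obtain ⟨b', hb', rfl, hb''⟩ := hb
    cases ha''; cases hb''
    rw [(f _).inj ha' hb']

@[simp]
theorem sigma_apply (f : ∀ i, α i ≃. β i) (i : ι) (a : α i) :
    sigma f ⟨i, a⟩ = (f i a).map (Sigma.mk i) :=
  rfl

theorem sigma_injective : Function.Injective (sigma (α := α) (β := β)) := by
  intro f g h
  funext i
  ext a b
  have := congrArg (· ⟨i, a⟩) h
  simp only [sigma_apply] at this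
  rw [← Option.map_injective sigma_mk_injective this]

theorem listTrans_sigma {κ : Type*} (θ : κ → ∀ i, α i ≃. α i) (w : List κ) :
    listTrans (fun a => sigma (θ a)) w = sigma fun i => listTrans (fun a => θ a i) w := by
  induction w with
  | nil => ext ⟨i, a⟩ : 1; simp
  | cons a w ih =>
    ext ⟨i, x⟩ : 1
    rcases h : θ a i x with _ | y <;> simp [ih, h]

end sigma

theorem isSome_of_isSome_trans {f : α ≃. β} {g : β ≃. γ} {a : α} (h : (f.trans g a).isSome) :
    (f a).isSome := by
  rw [trans_apply] at h
  cases hf : f a <;> simp_all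

def TransDefined (v : α ≃. β) (t : β ≃. γ) : Prop :=
  ∀ a, (v a).isSome → (v.trans t a).isSome

theorem transDefined_refl (v : α ≃. β) : TransDefined v (PEquiv.refl β) := by
  simp [TransDefined]

theorem transDefined_trans {δ : Type*} {v : α ≃. β} {t₁ : β ≃. γ} {t₂ : γ ≃. δ} :
    TransDefined v (t₁.trans t₂) ↔ TransDefined v t₁ ∧ TransDefined (v.trans t₁) t₂ := by
  simp only [TransDefined, ← trans_assoc]
  exact ⟨fun h => ⟨fun a ha => isSome_of_isSome_trans (h a ha),
    fun a ha => h a (isSome_of_isSome_trans ha)⟩, fun h a ha => h.2 a (h.1 a ha)⟩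

theorem trans_trans_symm_of_transDefined {v : α ≃. β} {t : β ≃. γ} (h : TransDefined v t) :
    (v.trans t).trans t.symm = v := by
  ext1 a
  rcases hv : v a with _ | b
  · simp [hv]
  · obtain ⟨c, hc⟩ := Option.isSome_iff_exists.mp (by simpa [hv] using h a (by simp [hv]))
    simp [hv, hc, (eq_some_iff t).mpr hc]

/-- Right translation by `t`, restricted to where it is injective. -/
noncomputable def transRight (t : β ≃. γ) : (α ≃. β) ≃. (α ≃. γ) :=
  open Classical in
  ofPartialInjective (fun v => if TransDefined v t then some (v.trans t) else none) <| by
    intro v₁ v₂ u h₁ h₂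
    split_ifs at h₁ h₂ with hv₁ hv₂
    rw [← trans_trans_symm_of_transDefined hv₁, ← trans_trans_symm_of_transDefined hv₂,
      Option.some.inj h₁, Option.some.inj h₂]

open Classical in
theorem transRight_apply (t : β ≃. γ) (v : α ≃. β) :
    transRight t v = if TransDefined v t then some (v.trans t) else none :=
  rfl

open Classical in
theorem listTrans_transRight {ι : Type*} (θ : ι → β ≃. β) (w : List ι) (v : α ≃. β) :
    listTrans (fun a => transRight (θ a)) w v =
      if TransDefined v (listTrans θ w) then some (v.trans (listTrans θ w)) else none := by
  induction w generalizing v with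
  | nil => simp [transDefined_refl]
  | cons a w ih =>
    simp only [listTrans, trans_apply, transRight_apply, transDefined_trans]
    by_cases h : TransDefined v (θ a)
    · simp [h, ih, trans_assoc]
    · simp [h]

theorem ofSet_trans_ofSet_trans [DecidableEq α] {D' D : Finset α} (h : D' ⊆ D) (t : α ≃. β) :
    (ofSet ↑D').trans ((ofSet ↑D).trans t) = (ofSet ↑D').trans t := by
  ext1 a
  by_cases ha : a ∈ D'
  · simp [ha, h ha]
  · simp [ha]

section dom

variable [Fintype α]

def dom (t : α ≃. β) : Finset α :=
  {a | (t a).isSome}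

@[simp]
theorem mem_dom {t : α ≃. β} {a : α} : a ∈ t.dom ↔ (t a).isSome := by
  simp [dom]

variable [DecidableEq α]

theorem transDefined_ofSet_iff {D : Finset α} {t : α ≃. β} :
    TransDefined (ofSet ↑D) t ↔ D ⊆ t.dom := by
  refine ⟨fun h a ha => ?_, fun h a ha => ?_⟩
  · simpa [ha] using h a (by simp [ha])
  · have ha' : a ∈ D := by by_contra ha'; simp [ha'] at ha
    simpa [ha'] using h ha'

theorem dom_ofSet_trans {D : Finset α} {t : α ≃. β} (h : D ⊆ t.dom) :
    ((ofSet ↑D).trans t).dom = D := by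
  ext a
  by_cases ha : a ∈ D <;> simp [ha]
  exact mem_dom.mp (h ha)

theorem ofSet_dom_trans (t : α ≃. β) : (ofSet ↑t.dom).trans t = t := by
  ext1 a
  by_cases ha : (t a).isSome <;> simp_all

end dom

end PEquiv

theorem IncidenceAlgebra.sum_Iic_sum_Iic_mu_mul {𝕜 P : Type*} [Ring 𝕜] [PartialOrder P]
    [OrderBot P] [LocallyFiniteOrder P] [DecidableEq P] (H : P → 𝕜) (x : P) :
    ∑ y ∈ Finset.Iic x, ∑ z ∈ Finset.Iic y, mu 𝕜 z y * H z = H x := by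
  rw [Finset.sum_comm' (t' := Finset.Iic x) (s' := fun z => Finset.Icc z x) (by
    intro y z
    simp only [Finset.mem_Iic, Finset.mem_Icc]
    exact ⟨fun h => ⟨⟨h.2, h.1⟩, h.2.trans h.1⟩, fun h => ⟨h.1.2, h.1.1⟩⟩)]
  simp_rw [← Finset.sum_mul, sum_Icc_mu_right, ite_mul, one_mul, zero_mul]
  simp

theorem Ideal.list_prod_mem_pow {R : Type*} [CommSemiring R] {I : Ideal R} {l : List R}
    (h : ∀ x ∈ l, x ∈ I) : l.prod ∈ I ^ l.length := by
  induction l with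
  | nil => simp
  | cons x l ih =>
    rw [List.prod_cons, List.length_cons, pow_succ']
    exact Ideal.mul_mem_mul (h x List.mem_cons_self)
      (ih fun y hy => h y (List.mem_cons_of_mem x hy))

open PEquiv

/-- `r` factors through a morphism from the free monoid on `α` into the monoid of partial
injections of a finite set. -/
def FactorsThroughPEquiv {α β : Type*} (r : List α → β) : Prop :=
  ∃ (S : Type) (_ : Finite S) (θ : α → S ≃. S) (g : (S ≃. S) → β), ∀ w, r w = g (listTrans θ w)

namespace FactorsThroughPEquiv

variable {α β γ : Type*} {r : List α → β}

theorem comp (h : FactorsThroughPEquiv r) (f : β → γ) : FactorsThroughPEquiv (f ∘ r) := by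
  obtain ⟨S, _, θ, g, hg⟩ := h
  exact ⟨S, ‹_›, θ, f ∘ g, fun w => congrArg f (hg w)⟩

theorem pi {ι : Type} [Finite ι] {β : ι → Type*} {r : ∀ i, List α → β i}
    (h : ∀ i, FactorsThroughPEquiv (r i)) : FactorsThroughPEquiv fun w i => r i w := by
  choose S _ θ g hg using h
  refine ⟨Σ i, S i, inferInstance, fun a => sigma fun i => θ i a,
    fun F i => g i (Function.invFun sigma F i), fun w => funext fun i => ?_⟩
  simp only [listTrans_sigma, Function.leftInverse_invFun sigma_injective _, hg]

end FactorsThroughPEquiv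

namespace RevWA

theorem mem_Rev_of_pequiv {R α : Type} [Semiring R] {Q : Type} [Fintype Q] [DecidableEq Q]
    (init final : Q → R) (θ : α → Q ≃. Q) :
    (fun w => init ⬝ᵥ (listTrans θ w).toMatrix *ᵥ final) ∈ Rev R α := by
  let e := Fintype.equivFin Q
  refine ⟨⟨Fintype.card Q, init ∘ e.symm, fun a => reindex e e (θ a).toMatrix, final ∘ e.symm⟩,
    fun a => ⟨fun i j j' hj hj' => ?_, fun i i' j hi hi' => ?_⟩, funext fun w => ?_⟩
  · exact e.symm.injective (Option.some.inj
      ((mem_of_toMatrix_ne_zero hj).symm.trans (mem_of_toMatrix_ne_zero hj')))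
  · exact e.symm.injective ((θ a).inj (mem_of_toMatrix_ne_zero hi) (mem_of_toMatrix_ne_zero hi'))
  · have hword : (w.map fun a => reindex e e ((θ a).toMatrix : Matrix Q Q R)).prod =
        reindex e e (listTrans θ w).toMatrix := by
      rw [toMatrix_listTrans, ← coe_reindexRingEquiv, map_list_prod, List.map_map]
      rfl
    change init ∘ e.symm ⬝ᵥ (w.map fun a => reindex e e ((θ a).toMatrix : Matrix Q Q R)).prod *ᵥ
      (final ∘ e.symm) = _
    rw [hword, reindex_apply, submatrix_mulVec_equiv, comp_equiv_symm_dotProduct]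
    simp [Function.comp_def]

end RevWA

open IncidenceAlgebra in
theorem FactorsThroughPEquiv.mem_Rev {R α : Type} [Ring R] {r : List α → R}
    (h : FactorsThroughPEquiv r) : r ∈ RevWA.Rev R α := by
  classical
  obtain ⟨S, _, θ, g, hg⟩ := h
  have := Fintype.ofFinite S
  have := Fintype.ofFinite (S ≃. S)
  -- From `ofSet D` the automaton reads `w` into `(ofSet D).trans (listTrans θ w)` if
  -- `D ⊆ (listTrans θ w).dom` and dies otherwise; `final` undoes the sum over `D` by
  -- Möbius inversion.
  let final : (S ≃. S) → R := fun u =>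
    ∑ D ∈ Finset.Iic u.dom, mu R D u.dom * g ((ofSet ↑D).trans u)
  convert RevWA.mem_Rev_of_pequiv (∑ D : Finset S, Pi.single (ofSet ↑D) 1) final
    (fun a => transRight (θ a)) using 1
  funext w
  set T := listTrans θ w
  calc r w = g ((ofSet ↑T.dom).trans T) := by rw [hg, ofSet_dom_trans]
    _ = ∑ D ∈ Finset.Iic T.dom, final ((ofSet ↑D).trans T) := by
      rw [← sum_Iic_sum_Iic_mu_mul (fun D : Finset S => g ((ofSet ↑D).trans T))]
      refine Finset.sum_congr rfl fun D hD => ?_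
      rw [Finset.mem_Iic] at hD
      simp only [final, dom_ofSet_trans hD]
      refine Finset.sum_congr rfl fun D' hD' => ?_
      rw [ofSet_trans_ofSet_trans (Finset.mem_Iic.mp hD')]
    _ = ∑ D : Finset S, (listTrans (fun a => transRight (θ a)) w (ofSet ↑D)).elim 0 final := by
      simp only [listTrans_transRight, transDefined_ofSet_iff, apply_ite (Option.elim · 0 final),
        Option.elim_some, Option.elim_none]
      rw [← Finset.sum_filter]
      exact Finset.sum_congr (by ext; simp [T]) fun _ _ => rfl
    _ = _ := by
      simp [sum_dotProduct, single_dotProduct, toMatrix_mulVec_apply]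

namespace RevWA

section map

variable {R R' α : Type} [Semiring R] [Semiring R']

def WA.map (φ : R →+* R') (A : WA R α) : WA R' α :=
  ⟨A.n, φ ∘ A.init, fun a => (A.trans a).map φ, φ ∘ A.final⟩

theorem WA.matWord_map (φ : R →+* R') (A : WA R α) (w : List α) :
    (A.map φ).matWord w = (A.matWord w).map φ := by
  change (w.map fun a => φ.mapMatrix (A.trans a)).prod = φ.mapMatrix (w.map A.trans).prod
  rw [map_list_prod, List.map_map]
  rfl

theorem WA.Reversible.map {A : WA R α} (hA : A.Reversible) (φ : R →+* R') :
    (A.map φ).Reversible := by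
  have hne {i j : Fin A.n} {a : α} (h : φ (A.trans a i j) ≠ 0) : A.trans a i j ≠ 0 :=
    fun h0 => h (by rw [h0, map_zero])
  exact fun a => ⟨fun i j j' h h' => (hA a).1 i j j' (hne h) (hne h'),
    fun i i' j h h' => (hA a).2 i i' j (hne h) (hne h')⟩

end map

section nextIndex

variable {R : Type} [Semiring R] {n : ℕ}

open Classical in
noncomputable def nextIndex (M : Matrix (Fin n) (Fin n) R) (p : Fin n) : Option (Fin n) :=
  if h : ∃ q, M p q ≠ 0 then some h.choose else none

theorem ne_zero_of_nextIndex_eq_some {M : Matrix (Fin n) (Fin n) R} {p q : Fin n}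
    (h : nextIndex M p = some q) : M p q ≠ 0 := by
  unfold nextIndex at h
  split_ifs at h with hp
  exact Option.some.inj h ▸ hp.choose_spec

theorem row_eq_elim_nextIndex {M : Matrix (Fin n) (Fin n) R} (hM : rowOk M) (p : Fin n) :
    M p = (nextIndex M p).elim 0 fun q => Pi.single q (M p q) := by
  rcases h : nextIndex M p with _ | q
  · unfold nextIndex at h
    split_ifs at h with hp
    push Not at hp
    exact funext hp
  · ext q'
    by_cases hq : q' = q
    · simp [hq]
    · rw [Option.elim_some, Pi.single_eq_of_ne hq]
      by_contra hq'
      exact hq (hM p q' q hq' (ne_zero_of_nextIndex_eq_some h))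

end nextIndex

section IsLocalRing

open IsLocalRing

variable {R : Type} [CommRing R] [IsLocalRing R] {B n : ℕ}

/-- A weight `u * t₁ * ⋯ * tₖ` with `u` a unit and `k ≤ B` factors `tᵢ` in the maximal ideal,
remembered as a list so that multiplication by a fixed element is injective. -/
abbrev FactoredWeight (R : Type) [CommRing R] [IsLocalRing R] (B : ℕ) : Type :=
  Rˣ × {l : List (maximalIdeal R) // l.length ≤ B}

namespace FactoredWeight

instance [Finite R] : Finite (FactoredWeight R B) :=
  have : Finite {l : List (maximalIdeal R) // l.length ≤ B} :=
    (List.finite_length_le _ B).to_subtype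
  inferInstanceAs (Finite (_ × _))

instance : One (FactoredWeight R B) :=
  ⟨(1, ⟨[], Nat.zero_le B⟩)⟩

def val (x : FactoredWeight R B) : R :=
  x.1 * (x.2.1.map (↑)).prod

theorem val_one : val (1 : FactoredWeight R B) = 1 := by
  change ((1 : Rˣ) : R) * (([] : List (maximalIdeal R)).map (↑)).prod = 1
  simp

open Classical in
noncomputable def mul (t : R) (x : FactoredWeight R B) : Option (FactoredWeight R B) :=
  if ht : IsUnit t then some (x.1 * ht.unit, x.2)
  else if hl : x.2.1.length < B then
    some (x.1, ⟨⟨t, (mem_maximalIdeal t).mpr ht⟩ :: x.2.1, hl⟩)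
  else none

theorem mul_injective (t : R) {x y z : FactoredWeight R B} (hx : mul t x = some z)
    (hy : mul t y = some z) : x = y := by
  unfold mul at hx hy
  split_ifs at hx hy with ht hlx hly <;> rw [← hy] at hx <;>
    simp only [Option.some.injEq, Prod.mk.injEq, Subtype.mk.injEq, List.cons.injEq,
      true_and] at hx
  · exact Prod.ext (mul_right_cancel hx.1) hx.2
  · exact Prod.ext hx.1 (Subtype.ext hx.2)

theorem elim_mul (hB : maximalIdeal R ^ B = ⊥) (t : R) (x : FactoredWeight R B) :
    (mul t x).elim 0 val = val x * t := by
  unfold mul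
  split_ifs with ht hl
  · simp [val, mul_right_comm]
  · simp [val]
    ring
  · have hmem : (t :: x.2.1.map Subtype.val).prod ∈ maximalIdeal R ^ B := by
      refine Ideal.pow_le_pow_right (by simp; omega) (Ideal.list_prod_mem_pow ?_)
      simp only [List.mem_cons, List.mem_map]
      rintro y (rfl | ⟨z, -, rfl⟩)
      exacts [(mem_maximalIdeal y).mpr ht, z.2]
    rw [hB, Ideal.mem_bot, List.prod_cons] at hmem
    simp only [Option.elim_none, val]
    linear_combination -(x.1 : R) * hmem

end FactoredWeight

noncomputable def localStep (M : Matrix (Fin n) (Fin n) R) (hM : colOk M) :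
    (Fin n × FactoredWeight R B) ≃. (Fin n × FactoredWeight R B) :=
  PEquiv.ofPartialInjective
    (fun s => (nextIndex M s.1).bind fun q => (FactoredWeight.mul (M s.1 q) s.2).map (q, ·)) <| by
    rintro ⟨p₁, x₁⟩ ⟨p₂, x₂⟩ ⟨q, y⟩ h₁ h₂
    simp only [Option.bind_eq_some_iff, Option.map_eq_some_iff, Prod.mk.injEq] at h₁ h₂
    obtain ⟨q₁, hq₁, y₁, hy₁, rfl, rfl⟩ := h₁
    obtain ⟨q₂, hq₂, y₂, hy₂, hq, hy⟩ := h₂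
    subst hq hy
    obtain rfl := hM p₁ p₂ q₂ (ne_zero_of_nextIndex_eq_some hq₁) (ne_zero_of_nextIndex_eq_some hq₂)
    rw [FactoredWeight.mul_injective _ hy₁ hy₂]

def stateRow (s : Fin n × FactoredWeight R B) : Fin n → R :=
  Pi.single s.1 s.2.val

theorem elim_localStep (hB : maximalIdeal R ^ B = ⊥) {M : Matrix (Fin n) (Fin n) R}
    (hM : rowOk M ∧ colOk M) (s : Fin n × FactoredWeight R B) :
    (localStep M hM.2 s).elim 0 stateRow = stateRow s ᵥ* M := by
  obtain ⟨p, x⟩ := s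
  rw [stateRow, single_vecMul]
  change _ = x.val • M p
  rw [row_eq_elim_nextIndex hM.1 p]
  rcases h : nextIndex M p with _ | q
  · simp [localStep, h]
  · rw [Option.elim_some, ← Pi.single_smul', smul_eq_mul, ← FactoredWeight.elim_mul hB]
    simp only [localStep, PEquiv.coe_ofPartialInjective, h, Option.bind_some]
    rcases FactoredWeight.mul (M p q) x <;> simp [stateRow]

theorem WA.Reversible.factorsThroughPEquiv_matWord_of_isLocalRing [Finite R] {α : Type}
    {A : WA R α} (hA : A.Reversible) : FactorsThroughPEquiv A.matWord := by
  obtain ⟨B, hB⟩ : IsNilpotent (maximalIdeal R) := by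
    rw [← jacobson_eq_maximalIdeal ⊥ bot_ne_top]
    exact IsArtinianRing.isNilpotent_jacobson_bot
  rw [Ideal.zero_eq_bot] at hB
  refine ⟨Fin A.n × FactoredWeight R B, inferInstance, fun a => localStep (A.trans a) (hA a).2,
    fun F => Matrix.of fun p => (F (p, 1)).elim 0 stateRow, fun w => ?_⟩
  ext p q
  change (w.map A.trans).prod p q =
    (listTrans (fun a => localStep (A.trans a) (hA a).2) w (p, 1)).elim 0 stateRow q
  rw [PEquiv.elim_listTrans_apply _ _ _ (fun a => elim_localStep hB (hA a)),
    stateRow, FactoredWeight.val_one, single_vecMul, one_smul]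
  rfl

end IsLocalRing

variable {R α : Type} [CommRing R] [Finite R]

theorem WA.Reversible.factorsThroughPEquiv_matWord {A : WA R α} (hA : A.Reversible) :
    FactorsThroughPEquiv A.matWord := by
  let e := (MaximalSpectrum.toPiLocalizationEquiv R).toRingEquiv
  let π (I : MaximalSpectrum R) : R →+* Localization.AtPrime I.asIdeal :=
    (Pi.evalRingHom _ I).comp e.toRingHom
  have (I : MaximalSpectrum R) : Finite (Localization.AtPrime I.asIdeal) :=
    Finite.of_surjective (π I) ((Function.surjective_eval I).comp e.surjective)
  have hfac := FactorsThroughPEquiv.pi fun I =>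
    (hA.map (π I)).factorsThroughPEquiv_matWord_of_isLocalRing
  convert hfac.comp fun v => Matrix.of fun p q : Fin A.n => e.symm fun I => v I p q using 1
  funext w
  ext p q
  change _ = e.symm fun I => (A.map (π I)).matWord w p q
  simp only [WA.matWord_map, Matrix.map_apply]
  exact (e.symm_apply_apply _).symm

theorem WA.Reversible.factorsThroughPEquiv_series {A : WA R α} (hA : A.Reversible) :
    FactorsThroughPEquiv A.series :=
  hA.factorsThroughPEquiv_matWord.comp fun M => A.init ⬝ᵥ M *ᵥ A.final

end RevWA

open RevWA in
theorem stmt19_general (R : Type) [CommRing R] [Fintype R] (α : Type) (r : List α → R) :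
    r ∈ Rev R α ↔ ∀ x : R, supp (fun w => r w + x) ∈ RevL R α := by
  constructor
  · rintro ⟨A, hA, rfl⟩ x
    exact ⟨_, (hA.factorsThroughPEquiv_series.comp (· + x)).mem_Rev, rfl⟩
  · classical
    intro h
    choose s hs hsupp using h
    have hfac : FactorsThroughPEquiv fun w x => s x w := FactorsThroughPEquiv.pi fun x => by
      obtain ⟨A, hA, hAs⟩ := hs x
      exact hAs ▸ hA.factorsThroughPEquiv_series
    convert (hfac.comp fun v => ∑ x, if v x = 0 then -x else 0).mem_Rev
    funext w
    have hzero (x : R) : s x w = 0 ↔ x = -r w := by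
      have := Set.ext_iff.mp (hsupp x) w
      simp only [supp, Set.mem_ofPred_eq, ne_eq, not_iff_not] at this
      rw [this, eq_neg_iff_add_eq_zero, add_comm]
    simp [hzero]

open RevWA in
theorem stmt19 (R : Type) [CommRing R] [Fintype R] (hR : (0 : R) ≠ 1)
    (α : Type) [Fintype α] [Nonempty α]
    (r : List α → R) (hrat : ∃ A : WA R α, A.series = r) :
    r ∈ Rev R α ↔ ∀ x : R, supp (fun w => r w + x) ∈ RevL R α :=
  stmt19_general R α r
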